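/- arXiv:0810.1464 — 2 statements merged into one kernel-verified Lean document; each statement's English description precedes it below -/
import Mathlib

section
/- Let T, N, B : I → ℝ³ with curvature κ and torsion τ be a Frenet-framed unit speed timelike curve in Minkowski 3-space on an open interval I, and assume κ(s)² − τ(s)² > 0 for all s ∈ I. Then the curve is a slant helix (i.e. there is a constant vector U ≠ 0 with s ↦ ⟨N(s),U⟩ constant) if and only if there is a real constant c such that for all s ∈ I, (κ(s)²/(κ(s)² − τ(s)²)^{3/2}) · (τ/κ)'(s) = c. -/
open Real

noncomputable def mink (x y : Fin 3 → ℝ) : ℝ := x 0 * y 0 + x 1 * y 1 - x 2 * y 2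

lemma mink_hasDerivAt {f g : ℝ → Fin 3 → ℝ} {f' g' : Fin 3 → ℝ} {s : ℝ}
    (hf : HasDerivAt f f' s) (hg : HasDerivAt g g' s) :
    HasDerivAt (fun t => mink (f t) (g t)) (mink f' (g s) + mink (f s) g') s := by
  have hf' := hasDerivAt_pi.mp hf
  have hg' := hasDerivAt_pi.mp hg
  have h := (((hf' 0).mul (hg' 0)).add ((hf' 1).mul (hg' 1))).sub ((hf' 2).mul (hg' 2))
  convert h using 1
  any_goals rfl
  all_goals simp [mink]
  ring

lemma const_on_of_deriv_zero {E : Type*} [NormedAddCommGroup E] [NormedSpace ℝ E]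
    {I : Set ℝ} (hconv : Convex ℝ I) {f : ℝ → E}
    (hf : ∀ s ∈ I, HasDerivAt f 0 s) {x y : ℝ} (hx : x ∈ I) (hy : y ∈ I) : f x = f y := by
  have h := hconv.norm_image_sub_le_of_norm_hasDerivWithin_le
    (C := 0) (f' := fun _ => (0 : E)) (fun z hz => (hf z hz).hasDerivWithinAt)
    (fun z hz => by simp) hx hy
  have := norm_le_zero_iff.mp (by simpa using h)
  rw [sub_eq_zero] at this
  exact this.symm

lemma sign_const {I : Set ℝ} (hconn : I.OrdConnected) {f : ℝ → ℝ}
    (hf : ContinuousOn f I) (h0 : ∀ s ∈ I, f s ≠ 0) {x y : ℝ} (hx : x ∈ I) (hy : y ∈ I) :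
    0 < f x * f y := by
  rcases lt_or_ge 0 (f x * f y) with h | h
  · exact h
  exfalso
  have hsub : Set.uIcc x y ⊆ I := hconn.uIcc_subset hx hy
  have := intermediate_value_uIcc (hf.mono hsub) (a := x) (b := y)
  have h0' : (0:ℝ) ∈ Set.uIcc (f x) (f y) := by
    rcases mul_nonpos_iff.mp h with ⟨h1, h2⟩ | ⟨h1, h2⟩
    · exact Set.mem_uIcc.mpr (Or.inr ⟨h2, h1⟩)
    · exact Set.mem_uIcc.mpr (Or.inl ⟨h1, h2⟩)
  obtain ⟨z, hz, hz0⟩ := this h0'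
  exact h0 z (hsub hz) hz0

lemma mink_expand (v t n b : Fin 3 → ℝ) (x y z : ℝ) :
    mink (x • t + y • n + z • b) v = x * mink t v + y * mink n v + z * mink b v := by
  simp [mink]; ring

lemma mink_rep {t n b : Fin 3 → ℝ}
    (hTT : mink t t = -1) (hNN : mink n n = 1) (hBB : mink b b = 1)
    (hTN : mink t n = 0) (hTB : mink t b = 0) (hNB : mink n b = 0) (U : Fin 3 → ℝ) :
    U = (-(mink t U)) • t + (mink n U) • n + (mink b U) • b := by
  have hcomm : ∀ x y : Fin 3 → ℝ, mink x y = mink y x := by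
    intro x y; simp [mink]; ring
  have li : LinearIndependent ℝ ![t, n, b] := by
    rw [Fintype.linearIndependent_iff]
    intro g hg
    have hsum : g 0 • t + g 1 • n + g 2 • b = 0 := by
      simpa [Fin.sum_univ_three] using hg
    have key : ∀ v : Fin 3 → ℝ,
        g 0 * mink t v + g 1 * mink n v + g 2 * mink b v = 0 := by
      intro v
      rw [← mink_expand, hsum]; simp [mink]
    have h0 := key t; have h1 := key n; have h2 := key b
    rw [hTT, hcomm n t, hTN, hcomm b t, hTB] at h0
    rw [hTN, hNN, hcomm b n, hNB] at h1
    rw [hTB, hNB, hBB] at h2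
    intro i; fin_cases i <;> simp_all <;> linarith
  have card_eq : Fintype.card (Fin 3) = Module.finrank ℝ (Fin 3 → ℝ) := by simp
  have hrepr := (basisOfLinearIndependentOfCardEqFinrank li card_eq).sum_repr U
  rw [coe_basisOfLinearIndependentOfCardEqFinrank] at hrepr
  set x := (basisOfLinearIndependentOfCardEqFinrank li card_eq).repr U with hx
  have hU : x 0 • t + x 1 • n + x 2 • b = U := by
    simpa [Fin.sum_univ_three] using hrepr
  have e0 : mink t U = -(x 0) := by
    rw [← hU, hcomm, mink_expand, hTT, hcomm n t, hTN, hcomm b t, hTB]; ring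
  have e1 : mink n U = x 1 := by
    rw [← hU, hcomm, mink_expand, hTN, hNN, hcomm b n, hNB]; ring
  have e2 : mink b U = x 2 := by
    rw [← hU, hcomm, mink_expand, hTB, hNB, hBB]; ring
  rw [e0, e1, e2, neg_neg, hU]

lemma mink_comm (x y : Fin 3 → ℝ) : mink x y = mink y x := by simp [mink]; ring

lemma mink_smul_left (r : ℝ) (x y : Fin 3 → ℝ) : mink (r • x) y = r * mink x y := by
  simp [mink]; ring

lemma mink_smul_add_left (r q : ℝ) (x y v : Fin 3 → ℝ) :
    mink (r • x + q • y) v = r * mink x v + q * mink y v := by simp [mink]; ring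

lemma mink_zero_right (x : Fin 3 → ℝ) : mink x 0 = 0 := by simp [mink]

lemma mink_expand_right (v t n b : Fin 3 → ℝ) (x y z : ℝ) :
    mink v (x • t + y • n + z • b) = x * mink v t + y * mink v n + z * mink v b := by
  simp [mink]; ring

lemma frame_norm {t n b : Fin 3 → ℝ}
    (hTT : mink t t = -1) (hNN : mink n n = 1) (hBB : mink b b = 1)
    (hTN : mink t n = 0) (hTB : mink t b = 0) (hNB : mink n b = 0) (x y z : ℝ) :
    mink (x • t + y • n + z • b) (x • t + y • n + z • b) = -x^2 + y^2 + z^2 := by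
  rw [mink_expand]
  rw [mink_expand_right, mink_expand_right, mink_expand_right]
  rw [hTT, hNN, hBB, hTN, hTB, hNB, mink_comm n t, mink_comm b t, mink_comm b n,
    hTN, hTB, hNB]
  ring

lemma frame_minkN {t n b : Fin 3 → ℝ}
    (hNN : mink n n = 1) (hTN : mink t n = 0) (hNB : mink n b = 0) (x y z : ℝ) :
    mink n (x • t + y • n + z • b) = y := by
  rw [mink_expand_right, hNN, hNB, mink_comm n t, hTN]; ring

lemma mink_self_pos_ne_zero {U : Fin 3 → ℝ} (h : 0 < mink U U) : U ≠ 0 := by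
  intro h0; rw [h0] at h; simp [mink] at h

lemma sq_eq_sq_pos_mul {X Y : ℝ} (h2 : X^2 = Y^2) (hXY : 0 < X * Y) : X = Y := by
  rcases mul_eq_zero.mp (show (X - Y) * (X + Y) = 0 by nlinarith) with h | h
  · linarith
  · nlinarith

theorem stmt1
    (I : Set ℝ) (hIopen : IsOpen I) (hIconn : I.OrdConnected)
    (T N B : ℝ → Fin 3 → ℝ) (κ τ : ℝ → ℝ)
    (hTs : ContDiffOn ℝ (⊤ : ℕ∞) T I) (hNs : ContDiffOn ℝ (⊤ : ℕ∞) N I)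
    (hBs : ContDiffOn ℝ (⊤ : ℕ∞) B I)
    (hκs : ContDiffOn ℝ (⊤ : ℕ∞) κ I) (hκ0 : ∀ s ∈ I, κ s ≠ 0)
    (hτs : ContDiffOn ℝ (⊤ : ℕ∞) τ I) (hτ0 : ∀ s ∈ I, τ s ≠ 0)
    (hTT : ∀ s ∈ I, mink (T s) (T s) = -1)
    (hNN : ∀ s ∈ I, mink (N s) (N s) = 1)
    (hBB : ∀ s ∈ I, mink (B s) (B s) = 1)
    (hTN : ∀ s ∈ I, mink (T s) (N s) = 0)
    (hTB : ∀ s ∈ I, mink (T s) (B s) = 0)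
    (hNB : ∀ s ∈ I, mink (N s) (B s) = 0)
    (hT' : ∀ s ∈ I, HasDerivAt T (κ s • N s) s)
    (hN' : ∀ s ∈ I, HasDerivAt N (κ s • T s + τ s • B s) s)
    (hB' : ∀ s ∈ I, HasDerivAt B (-τ s • N s) s)
    (hpos : ∀ s ∈ I, κ s ^ 2 - τ s ^ 2 > 0) :
    (∃ U : Fin 3 → ℝ, U ≠ 0 ∧ ∃ d : ℝ, ∀ s ∈ I, mink (N s) U = d) ↔
      (∃ c : ℝ, ∀ s ∈ I, κ s ^ 2 / (κ s ^ 2 - τ s ^ 2) ^ ((3 : ℝ) / 2) * deriv (fun u => τ u / κ u) s = c) := by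
  classical
  rcases Set.eq_empty_or_nonempty I with rfl | ⟨s₀, hs₀⟩
  · constructor
    · intro _; exact ⟨0, by simp⟩
    · intro _
      refine ⟨fun _ => 1, ?_, 0, by simp⟩
      intro h
      have := congrFun h 0
      simp at this
  have hconv : Convex ℝ I := convex_iff_ordConnected.mpr hIconn
  -- basic derivative facts
  have hκd : ∀ s ∈ I, HasDerivAt κ (deriv κ s) s := fun s hs =>
    ((hκs.differentiableOn (by simp)).differentiableAt (hIopen.mem_nhds hs)).hasDerivAt
  have hτd : ∀ s ∈ I, HasDerivAt τ (deriv τ s) s := fun s hs =>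
    ((hτs.differentiableOn (by simp)).differentiableAt (hIopen.mem_nhds hs)).hasDerivAt
  have hQpos : ∀ s ∈ I, (0:ℝ) < κ s ^ 2 - τ s ^ 2 := hpos
  have hsqpos : ∀ s ∈ I, (0:ℝ) < Real.sqrt (κ s ^ 2 - τ s ^ 2) := fun s hs =>
    Real.sqrt_pos.mpr (hQpos s hs)
  have hsq2 : ∀ s ∈ I, Real.sqrt (κ s ^ 2 - τ s ^ 2) ^ 2 = κ s ^ 2 - τ s ^ 2 := fun s hs =>
    Real.sq_sqrt (le_of_lt (hQpos s hs))
  have hrpow : ∀ s ∈ I, (κ s ^ 2 - τ s ^ 2) ^ ((3:ℝ)/2)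
      = (κ s ^ 2 - τ s ^ 2) * Real.sqrt (κ s ^ 2 - τ s ^ 2) := by
    intro s hs
    rw [show (3:ℝ)/2 = 1 + 1/2 by norm_num, Real.rpow_add (hQpos s hs), Real.rpow_one,
      ← Real.sqrt_eq_rpow]
  have hdivd : ∀ s ∈ I, HasDerivAt (fun u => τ u / κ u)
      ((deriv τ s * κ s - τ s * deriv κ s) / κ s ^ 2) s := fun s hs =>
    (hτd s hs).div (hκd s hs) (hκ0 s hs)
  have hderiv_div : ∀ s ∈ I, deriv (fun u => τ u / κ u) s
      = (deriv τ s * κ s - τ s * deriv κ s) / κ s ^ 2 := fun s hs => (hdivd s hs).deriv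
  constructor
  · rintro ⟨U, hUne, d, hU⟩
    set a : ℝ → ℝ := fun s => -(mink (T s) U) with ha_def
    set cc : ℝ → ℝ := fun s => mink (B s) U with hcc_def
    have ha' : ∀ s ∈ I, HasDerivAt a (-(κ s * d)) s := by
      intro s hs
      have h := ((mink_hasDerivAt (hT' s hs) (hasDerivAt_const s U))).neg
      rw [mink_zero_right, add_zero, mink_smul_left, hU s hs] at h
      exact h
    have hc' : ∀ s ∈ I, HasDerivAt cc (-(τ s * d)) s := by
      intro s hs
      have h := mink_hasDerivAt (hB' s hs) (hasDerivAt_const s U)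
      rw [mink_zero_right, add_zero, mink_smul_left, hU s hs] at h
      simpa using h
    have hF1 : ∀ s ∈ I, τ s * cc s = κ s * a s := by
      intro s hs
      have hev : (fun t => mink (N t) U) =ᶠ[nhds s] (fun _ => d) :=
        Filter.eventuallyEq_of_mem (hIopen.mem_nhds hs) (fun t ht => hU t ht)
      have h1 : HasDerivAt (fun t => mink (N t) U) 0 s :=
        (hasDerivAt_const s d).congr_of_eventuallyEq hev
      have h2 := mink_hasDerivAt (hN' s hs) (hasDerivAt_const s U)
      rw [mink_zero_right, add_zero, mink_smul_add_left] at h2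
      have := h1.unique h2
      simp only [ha_def, hcc_def]
      linarith [this]
    have hF2 : ∀ s ∈ I, deriv τ s * cc s - deriv κ s * a s = -d * (κ s ^ 2 - τ s ^ 2) := by
      intro s hs
      have hev : (fun t => τ t * cc t) =ᶠ[nhds s] (fun t => κ t * a t) :=
        Filter.eventuallyEq_of_mem (hIopen.mem_nhds hs) (fun t ht => hF1 t ht)
      have h1 : HasDerivAt (fun t => τ t * cc t)
          (deriv τ s * cc s + τ s * -(τ s * d)) s := (hτd s hs).mul (hc' s hs)
      have h2 : HasDerivAt (fun t => κ t * a t)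
          (deriv κ s * a s + κ s * -(κ s * d)) s := (hκd s hs).mul (ha' s hs)
      have h2' : HasDerivAt (fun t => τ t * cc t)
          (deriv κ s * a s + κ s * -(κ s * d)) s := h2.congr_of_eventuallyEq hev
      have := h1.unique h2'
      nlinarith [this]
    have hrep : ∀ s ∈ I, U = a s • T s + d • N s + cc s • B s := by
      intro s hs
      have h := mink_rep (hTT s hs) (hNN s hs) (hBB s hs) (hTN s hs) (hTB s hs) (hNB s hs) U
      rw [hU s hs] at h
      exact h
    have hm : ∀ s ∈ I, mink U U = -(a s)^2 + d^2 + (cc s)^2 := by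
      intro s hs
      calc mink U U = mink (a s • T s + d • N s + cc s • B s) (a s • T s + d • N s + cc s • B s) := by
            rw [← hrep s hs]
        _ = -(a s)^2 + d^2 + (cc s)^2 :=
            frame_norm (hTT s hs) (hNN s hs) (hBB s hs) (hTN s hs) (hTB s hs) (hNB s hs) _ _ _
    have hF7 : ∀ s ∈ I, a s * (deriv τ s * κ s - deriv κ s * τ s)
        = -(d * τ s * (κ s ^ 2 - τ s ^ 2)) := by
      intro s hs
      have h1 := hF1 s hs
      have h2 := hF2 s hs
      linear_combination τ s * h2 - deriv τ s * h1
    by_cases hd : d = 0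
    · subst hd
      have haconst : ∀ s ∈ I, a s = a s₀ := by
        intro s hs
        exact const_on_of_deriv_zero hconv (fun t ht => by simpa using ha' t ht) hs hs₀
      have hccconst : ∀ s ∈ I, cc s = cc s₀ := by
        intro s hs
        exact const_on_of_deriv_zero hconv (fun t ht => by simpa using hc' t ht) hs hs₀
      have ha0 : a s₀ ≠ 0 := by
        intro h0
        have hcc0 : cc s₀ = 0 := by
          have h1 := hF1 s₀ hs₀
          rw [h0, mul_zero] at h1
          exact (mul_eq_zero.mp h1).resolve_left (hτ0 s₀ hs₀)
        apply hUne
        have := hrep s₀ hs₀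
        rw [h0, hcc0] at this
        simpa using this
      refine ⟨0, fun s hs => ?_⟩
      have h7 := hF7 s hs
      simp only [neg_zero, zero_mul, mul_zero] at h7
      have hnum : deriv τ s * κ s - deriv κ s * τ s = 0 := by
        have has : a s ≠ 0 := by rw [haconst s hs]; exact ha0
        rcases mul_eq_zero.mp h7 with h | h
        · exact absurd h has
        · exact h
      rw [hderiv_div s hs]
      have : deriv τ s * κ s - τ s * deriv κ s = 0 := by linarith
      rw [this]
      simp
    · -- d ≠ 0
      have hane : ∀ s ∈ I, a s ≠ 0 := by
        intro s hs h0
        have h1 := hF1 s hs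
        rw [h0, mul_zero] at h1
        have hcc0 : cc s = 0 :=
          (mul_eq_zero.mp h1).resolve_left (hτ0 s hs)
        have h2 := hF2 s hs
        rw [h0, hcc0] at h2
        simp at h2
        rcases h2 with h | h
        · exact hd h
        · exact absurd h (ne_of_gt (hQpos s hs))
      set m : ℝ := mink U U with hm_def
      have hm2 : ∀ s ∈ I, a s ^ 2 * (κ s ^ 2 - τ s ^ 2) = (m - d^2) * τ s ^ 2 := by
        intro s hs
        have h1 := hF1 s hs
        have h3 := hm s hs
        linear_combination (-(τ s * cc s + κ s * a s)) * h1 - τ s^2 * h3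
      have hmd : 0 < m - d^2 := by
        have h := hm2 s₀ hs₀
        have hq := hQpos s₀ hs₀
        have han := hane s₀ hs₀
        have htn := hτ0 s₀ hs₀
        have h1 : 0 < a s₀ ^ 2 * (κ s₀ ^ 2 - τ s₀ ^ 2) := by positivity
        have h2 : 0 < τ s₀ ^ 2 := by positivity
        nlinarith
      -- continuity of τ * a
      have haC : ContinuousOn (fun s => τ s * a s) I := by
        have hTc : ContinuousOn T I := hTs.continuousOn
        have hco : ∀ i : Fin 3, ContinuousOn (fun s => T s i) I := fun i =>
          (continuous_apply i).comp_continuousOn hTc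
        have haC' : ContinuousOn a I := by
          have : a = fun s => -(T s 0 * U 0 + T s 1 * U 1 - T s 2 * U 2) := rfl
          rw [this]
          exact ((((hco 0).mul continuousOn_const).add
            ((hco 1).mul continuousOn_const)).sub ((hco 2).mul continuousOn_const)).neg
        exact (hτs.continuousOn).mul haC'
      have hp : ∀ s ∈ I, 0 < (τ s * a s) * (τ s₀ * a s₀) := by
        intro s hs
        exact sign_const hIconn haC
          (fun t ht => mul_ne_zero (hτ0 t ht) (hane t ht)) hs hs₀
      refine ⟨κ s₀ ^ 2 / (κ s₀ ^ 2 - τ s₀ ^ 2) ^ ((3:ℝ)/2) * deriv (fun u => τ u / κ u) s₀,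
        fun s hs => ?_⟩
      -- step 1: rewrite both sides
      have hstep : ∀ t ∈ I, κ t ^ 2 / (κ t ^ 2 - τ t ^ 2) ^ ((3:ℝ)/2) * deriv (fun u => τ u / κ u) t
          = -(d * τ t) / (a t * Real.sqrt (κ t ^ 2 - τ t ^ 2)) := by
        intro t ht
        rw [hderiv_div t ht, hrpow t ht]
        have hκt := hκ0 t ht
        have hQt := ne_of_gt (hQpos t ht)
        have hst := ne_of_gt (hsqpos t ht)
        have hat := hane t ht
        have h7 := hF7 t ht
        have hsqt := hsq2 t ht
        field_simp
        linear_combination h7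
      rw [hstep s hs, hstep s₀ hs₀]
      -- step 2
      have hXY : τ s * (a s₀ * Real.sqrt (κ s₀ ^ 2 - τ s₀ ^ 2))
          = τ s₀ * (a s * Real.sqrt (κ s ^ 2 - τ s ^ 2)) := by
        apply sq_eq_sq_pos_mul
        · have h1 := hm2 s hs
          have h2 := hm2 s₀ hs₀
          have e1 := hsq2 s hs
          have e2 := hsq2 s₀ hs₀
          linear_combination τ s^2 * a s₀^2 * e2 - τ s₀^2 * a s^2 * e1 + τ s^2 * h2 - τ s₀^2 * h1
        · have h1 := hp s hs
          have h2 := hsqpos s hs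
          have h3 := hsqpos s₀ hs₀
          nlinarith [mul_pos (mul_pos h1 h2) h3]
      rw [div_eq_div_iff
        (mul_ne_zero (hane s hs) (ne_of_gt (hsqpos s hs)))
        (mul_ne_zero (hane s₀ hs₀) (ne_of_gt (hsqpos s₀ hs₀)))]
      linear_combination (-d) * hXY
  · rintro ⟨c, hc⟩
    have keyC : ∀ s ∈ I, deriv τ s * κ s - τ s * deriv κ s
        = c * ((κ s ^ 2 - τ s ^ 2) * Real.sqrt (κ s ^ 2 - τ s ^ 2)) := by
      intro s hs
      have h := hc s hs
      rw [hderiv_div s hs, hrpow s hs] at h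
      have hκt := hκ0 s hs
      have hQt := ne_of_gt (hQpos s hs)
      have hst := ne_of_gt (hsqpos s hs)
      have hXne : (κ s ^ 2 - τ s ^ 2) * Real.sqrt (κ s ^ 2 - τ s ^ 2) ≠ 0 :=
        mul_ne_zero hQt hst
      have h2 : (deriv τ s * κ s - τ s * deriv κ s)
          / ((κ s ^ 2 - τ s ^ 2) * Real.sqrt (κ s ^ 2 - τ s ^ 2)) = c := by
        rw [← h]
        field_simp
      rw [div_eq_iff hXne] at h2
      exact h2
    by_cases hc0 : c = 0
    · subst hc0
      set W : ℝ → Fin 3 → ℝ := fun s => (τ s / κ s) • T s + (0:ℝ) • N s + (1:ℝ) • B s with hW_def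
      have hW' : ∀ s ∈ I, HasDerivAt W 0 s := by
        intro s hs
        have hratio : HasDerivAt (fun u => τ u / κ u) 0 s := by
          have h := hdivd s hs
          have : (deriv τ s * κ s - τ s * deriv κ s) / κ s ^ 2 = 0 := by
            rw [keyC s hs]; simp
          rwa [this] at h
        have h1 := hratio.smul (hT' s hs)
        have h2 := (hasDerivAt_const s (0:ℝ)).smul (hN' s hs)
        have h3 := (hasDerivAt_const s (1:ℝ)).smul (hB' s hs)
        have h := (h1.add h2).add h3
        convert h using 1
        any_goals rfl
        funext i
        have hκs' := hκ0 s hs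
        simp [smul_smul]
        field_simp
        ring
      have hWc : ∀ s ∈ I, W s = W s₀ := fun s hs =>
        const_on_of_deriv_zero hconv hW' hs hs₀
      refine ⟨W s₀, ?_, 0, ?_⟩
      · apply mink_self_pos_ne_zero
        have h := frame_norm (hTT s₀ hs₀) (hNN s₀ hs₀) (hBB s₀ hs₀) (hTN s₀ hs₀)
          (hTB s₀ hs₀) (hNB s₀ hs₀) (τ s₀ / κ s₀) 0 1
        rw [hW_def]
        simp only []
        rw [h]
        have hκ₀ := hκ0 s₀ hs₀
        have h1 : (τ s₀ / κ s₀)^2 < 1 := by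
          rw [div_pow, div_lt_one (by positivity)]
          nlinarith [hQpos s₀ hs₀]
        nlinarith [h1]
      · intro s hs
        rw [← hWc s hs, hW_def]
        exact frame_minkN (hNN s hs) (hTN s hs) (hNB s hs) _ _ _
    · -- c ≠ 0
      set p1 : ℝ → ℝ := fun s => -(τ s / (c * Real.sqrt (κ s ^ 2 - τ s ^ 2))) with hp1_def
      set p3 : ℝ → ℝ := fun s => -(κ s / (c * Real.sqrt (κ s ^ 2 - τ s ^ 2))) with hp3_def
      set W : ℝ → Fin 3 → ℝ := fun s => p1 s • T s + (1:ℝ) • N s + p3 s • B s with hW_def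
      have hg : ∀ s ∈ I, HasDerivAt (fun u => c * Real.sqrt (κ u ^ 2 - τ u ^ 2))
          (c * ((2 * κ s * deriv κ s - 2 * τ s * deriv τ s)
            / (2 * Real.sqrt (κ s ^ 2 - τ s ^ 2)))) s := by
        intro s hs
        have hQ' : HasDerivAt (fun u => κ u ^ 2 - τ u ^ 2)
            (2 * κ s * deriv κ s - 2 * τ s * deriv τ s) s := by
          have h1 := ((hκd s hs).pow 2)
          have h2 := ((hτd s hs).pow 2)
          have := h1.sub h2
          convert this using 1
          any_goals rfl
          ring
        exact (hQ'.sqrt (ne_of_gt (hQpos s hs))).const_mul c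
      have hp1' : ∀ s ∈ I, HasDerivAt p1 (-(κ s)) s := by
        intro s hs
        have hgne : c * Real.sqrt (κ s ^ 2 - τ s ^ 2) ≠ 0 :=
          mul_ne_zero hc0 (ne_of_gt (hsqpos s hs))
        have h := ((hτd s hs).div (hg s hs) hgne).neg
        convert h using 1
        any_goals rfl
        have hκt := hκ0 s hs
        have hQt := ne_of_gt (hQpos s hs)
        have hst := ne_of_gt (hsqpos s hs)
        have hsqt := hsq2 s hs
        have hk := keyC s hs
        field_simp
        linear_combination (deriv τ s - κ s * c * Real.sqrt (κ s ^ 2 - τ s ^ 2)) * hsqt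
          + κ s * hk
      have hp3' : ∀ s ∈ I, HasDerivAt p3 (-(τ s)) s := by
        intro s hs
        have hgne : c * Real.sqrt (κ s ^ 2 - τ s ^ 2) ≠ 0 :=
          mul_ne_zero hc0 (ne_of_gt (hsqpos s hs))
        have h := ((hκd s hs).div (hg s hs) hgne).neg
        convert h using 1
        any_goals rfl
        have hκt := hκ0 s hs
        have hQt := ne_of_gt (hQpos s hs)
        have hst := ne_of_gt (hsqpos s hs)
        have hsqt := hsq2 s hs
        have hk := keyC s hs
        field_simp
        linear_combination (deriv κ s - τ s * c * Real.sqrt (κ s ^ 2 - τ s ^ 2)) * hsqt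
          + τ s * hk
      have hW' : ∀ s ∈ I, HasDerivAt W 0 s := by
        intro s hs
        have h1 := (hp1' s hs).smul (hT' s hs)
        have h2 := (hasDerivAt_const s (1:ℝ)).smul (hN' s hs)
        have h3 := (hp3' s hs).smul (hB' s hs)
        have h := (h1.add h2).add h3
        convert h using 1
        any_goals rfl
        funext i
        simp [smul_smul, hp1_def, hp3_def]
        ring
      have hWc : ∀ s ∈ I, W s = W s₀ := fun s hs =>
        const_on_of_deriv_zero hconv hW' hs hs₀
      refine ⟨W s₀, ?_, 1, ?_⟩
      · apply mink_self_pos_ne_zero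
        have h := frame_norm (hTT s₀ hs₀) (hNN s₀ hs₀) (hBB s₀ hs₀) (hTN s₀ hs₀)
          (hTB s₀ hs₀) (hNB s₀ hs₀) (p1 s₀) 1 (p3 s₀)
        rw [hW_def]
        simp only []
        rw [h]
        have key : (p3 s₀)^2 - (p1 s₀)^2 = 1 / c^2 := by
          rw [hp1_def, hp3_def]
          have hsqt := hsq2 s₀ hs₀
          have hst := ne_of_gt (hsqpos s₀ hs₀)
          have hQt := ne_of_gt (hQpos s₀ hs₀)
          field_simp
          linear_combination (-1 : ℝ) * hsqt
        have hc2 : 0 < c^2 := by positivity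
        have heq : -(p1 s₀)^2 + 1^2 + (p3 s₀)^2 = 1 + 1/c^2 := by
          linear_combination key
        rw [heq]
        positivity
      · intro s hs
        rw [← hWc s hs, hW_def]
        exact frame_minkN (hNN s hs) (hTN s hs) (hNB s hs) _ _ _
end

section
/- Let T, N, B : I → ℝ³ with torsion τ be a Frenet-framed unit speed lightlike curve in Minkowski 3-space on an open interval I, let U ∈ ℝ³ be a constant vector, let c ∈ ℝ, and let a₁, a₃ : I → ℝ be smooth functions such that U = a₁(s)·T(s) + c·N(s) + a₃(s)·B(s) for all s ∈ I. Then for all s ∈ I: a₁'(s) + c·τ(s) = 0, a₁(s) − τ(s)·a₃(s) = 0, and a₃'(s) − c = 0; consequently there is a constant m ∈ ℝ with a₃(s) = c·s + m and a₁(s) = (c·s + m)·τ(s) for all s ∈ I, and moreover (c·s + m)·τ'(s) + 2c·τ(s) = 0 for all s ∈ I. -/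
open Real

lemma mink_lin (a b d : ℝ) (x y z w : Fin 3 → ℝ) :
    mink (a • x + b • y + d • z) w = a * mink x w + b * mink y w + d * mink z w := by
  simp [mink, Pi.add_apply, Pi.smul_apply, smul_eq_mul]; ring

lemma mink_zero (y : Fin 3 → ℝ) : mink 0 y = 0 := by simp [mink]

theorem stmt11
    (I : Set ℝ) (hIopen : IsOpen I) (hIconn : I.OrdConnected)
    (T N B : ℝ → Fin 3 → ℝ) (τ : ℝ → ℝ)
    (hTs : ContDiffOn ℝ (⊤ : ℕ∞) T I) (hNs : ContDiffOn ℝ (⊤ : ℕ∞) N I)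
    (hBs : ContDiffOn ℝ (⊤ : ℕ∞) B I)
    (hτs : ContDiffOn ℝ (⊤ : ℕ∞) τ I) (hτ0 : ∀ s ∈ I, τ s ≠ 0)
    (hTT : ∀ s ∈ I, mink (T s) (T s) = 0)
    (hNN : ∀ s ∈ I, mink (N s) (N s) = 1)
    (hBB : ∀ s ∈ I, mink (B s) (B s) = 0)
    (hTN : ∀ s ∈ I, mink (T s) (N s) = 0)
    (hTB : ∀ s ∈ I, mink (T s) (B s) = 1)
    (hNB : ∀ s ∈ I, mink (N s) (B s) = 0)
    (hT' : ∀ s ∈ I, HasDerivAt T (N s) s)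
    (hN' : ∀ s ∈ I, HasDerivAt N (τ s • T s - B s) s)
    (hB' : ∀ s ∈ I, HasDerivAt B (-τ s • N s) s)
    (U : Fin 3 → ℝ) (c : ℝ) (a₁ a₃ : ℝ → ℝ)
    (ha₁s : ContDiffOn ℝ (⊤ : ℕ∞) a₁ I) (ha₃s : ContDiffOn ℝ (⊤ : ℕ∞) a₃ I)
    (hU : ∀ s ∈ I, U = a₁ s • T s + c • N s + a₃ s • B s) :
    (∀ s ∈ I, deriv a₁ s + c * τ s = 0) ∧
    (∀ s ∈ I, a₁ s - τ s * a₃ s = 0) ∧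
    (∀ s ∈ I, deriv a₃ s - c = 0) ∧
    (∃ m : ℝ, (∀ s ∈ I, a₃ s = c * s + m ∧ a₁ s = (c * s + m) * τ s) ∧
      ∀ s ∈ I, (c * s + m) * deriv τ s + 2 * c * τ s = 0) := by
  have hd1 : ∀ s ∈ I, HasDerivAt a₁ (deriv a₁ s) s := fun s hs =>
    ((ha₁s.contDiffAt (hIopen.mem_nhds hs)).differentiableAt (by norm_num)).hasDerivAt
  have hd3 : ∀ s ∈ I, HasDerivAt a₃ (deriv a₃ s) s := fun s hs =>
    ((ha₃s.contDiffAt (hIopen.mem_nhds hs)).differentiableAt (by norm_num)).hasDerivAt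
  have hdτ : ∀ s ∈ I, HasDerivAt τ (deriv τ s) s := fun s hs =>
    ((hτs.contDiffAt (hIopen.mem_nhds hs)).differentiableAt (by norm_num)).hasDerivAt
  have key : ∀ s ∈ I, (deriv a₁ s + c * τ s) • T s + (a₁ s - τ s * a₃ s) • N s
      + (deriv a₃ s - c) • B s = 0 := by
    intro s hs
    have hF : HasDerivAt (fun t => a₁ t • T t + c • N t + a₃ t • B t)
        ((a₁ s • N s + deriv a₁ s • T s) + c • (τ s • T s - B s)
          + (a₃ s • (-τ s • N s) + deriv a₃ s • B s)) s :=
      (((hd1 s hs).smul (hT' s hs)).add ((hN' s hs).const_smul c)).add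
        ((hd3 s hs).smul (hB' s hs))
    have hFc : HasDerivAt (fun t => a₁ t • T t + c • N t + a₃ t • B t) 0 s := by
      have heq : (fun t => a₁ t • T t + c • N t + a₃ t • B t) =ᶠ[nhds s] fun _ => U := by
        filter_upwards [hIopen.mem_nhds hs] with t ht using (hU t ht).symm
      exact (hasDerivAt_const s U).congr_of_eventuallyEq heq
    have h0 := hF.unique hFc
    rw [← h0]
    module
  have h1 : ∀ s ∈ I, deriv a₁ s + c * τ s = 0 := by
    intro s hs
    have := congrArg (fun v => mink v (B s)) (key s hs)
    simpa [mink_lin, mink_zero, hTB s hs, hNB s hs, hBB s hs] using this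
  have h2 : ∀ s ∈ I, a₁ s - τ s * a₃ s = 0 := by
    intro s hs
    have := congrArg (fun v => mink v (N s)) (key s hs)
    have hNT : mink (T s) (N s) = 0 := hTN s hs
    have hBN : mink (B s) (N s) = 0 := by rw [mink_comm]; exact hNB s hs
    simpa [mink_lin, mink_zero, hNT, hNN s hs, hBN] using this
  have h3 : ∀ s ∈ I, deriv a₃ s - c = 0 := by
    intro s hs
    have := congrArg (fun v => mink v (T s)) (key s hs)
    have hNT : mink (N s) (T s) = 0 := by rw [mink_comm]; exact hTN s hs
    have hBT : mink (B s) (T s) = 1 := by rw [mink_comm]; exact hTB s hs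
    simpa [mink_lin, mink_zero, hTT s hs, hNT, hBT] using this
  refine ⟨h1, h2, h3, ?_⟩
  rcases Set.eq_empty_or_nonempty I with hI | ⟨s₀, hs₀⟩
  · exact ⟨0, fun s hs => absurd hs (by simp [hI]), fun s hs => absurd hs (by simp [hI])⟩
  set m : ℝ := a₃ s₀ - c * s₀ with hm
  have hconst : ∀ z ∈ I, a₃ z - c * z = m := by
    intro z hz
    have hdiff : DifferentiableOn ℝ (fun t => a₃ t - c * t) I := fun t ht =>
      ((hd3 t ht).sub ((hasDerivAt_id t).const_mul c)).differentiableAt.differentiableWithinAt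
    have hfd : ∀ t ∈ I, fderivWithin ℝ (fun t => a₃ t - c * t) I t = 0 := by
      intro t ht
      have hdz : HasDerivAt (fun t => a₃ t - c * t) 0 t := by
        have h := (hd3 t ht).sub ((hasDerivAt_id t).const_mul c)
        have : deriv a₃ t - c * 1 = 0 := by have := h3 t ht; linarith
        rwa [this] at h
      rw [fderivWithin_of_isOpen hIopen ht, hdz.hasFDerivAt.fderiv]
      apply ContinuousLinearMap.ext; intro x; simp
    exact hIconn.convex.is_const_of_fderivWithin_eq_zero hdiff hfd hz hs₀
  have ha3 : ∀ s ∈ I, a₃ s = c * s + m := fun s hs => by have := hconst s hs; linarith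
  have ha1 : ∀ s ∈ I, a₁ s = (c * s + m) * τ s := by
    intro s hs
    have := h2 s hs
    rw [← ha3 s hs]; linarith
  refine ⟨m, fun s hs => ⟨ha3 s hs, ha1 s hs⟩, ?_⟩
  intro s hs
  have hda1 : HasDerivAt a₁ (c * τ s + (c * s + m) * deriv τ s) s := by
    have hprod : HasDerivAt (fun t => (c * t + m) * τ t)
        (c * 1 * τ s + (c * s + m) * deriv τ s) s :=
      (((hasDerivAt_id s).const_mul c).add_const m).mul (hdτ s hs)
    have heq : (fun t => (c * t + m) * τ t) =ᶠ[nhds s] a₁ := by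
      filter_upwards [hIopen.mem_nhds hs] with t ht using (ha1 t ht).symm
    simpa using hprod.congr_of_eventuallyEq heq.symm
  have : deriv a₁ s = c * τ s + (c * s + m) * deriv τ s := hda1.deriv
  have := h1 s hs
  linarith
end
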